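/- Let (R, m) be a complete commutative Noetherian local integral domain and let M = ⊕_{i=1}^∞ R/a_i be a countable direct sum of cyclic modules (a_i ideals of R) which is a faithful R-module, i.e. ⋂_{i=1}^∞ a_i = 0. Then the zero ideal is an associated prime of the m-adic completion M̂, i.e. there exists x ∈ M̂ with Ann_R(x) = 0. -/

import Mathlib

/-!
If some `a j` is zero, the image of the basis vector `e_j` has trivial annihilator. Otherwise,
as `R` is a domain, every tail intersection `⋂_{i ≥ N} a i` is zero. Fix `0 ≠ γ ∈ m`. Chevalley's
lemma (in a complete local ring a decreasing sequence of ideals with zero intersection eventually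
lies in every `m ^ t`), applied to the ideals `{r | r γ ^ t ∈ a i for N ≤ i < L}`, yields a finite
block `[N, N')` such that `r γ ^ t ∈ a i` for all `i` in the block forces `r ∈ m ^ t`. For
consecutive such blocks `B_t`, the series `x = ∑_t γ ^ t ∑_{i ∈ B_t} e_i` converges in `M̂`, and
any `r` with `r x = 0` lies in every `m ^ t`, so `r = 0` by Krull's intersection theorem.
-/

open IsLocalRing Filter DirectSum

universe u

variable {R : Type u} [CommRing R]

theorem Ideal.iInf_sup_pow_eq_self (I J : Ideal R) [IsHausdorff I (R ⧸ J)] :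
    ⨅ k : ℕ, (J ⊔ I ^ k) = J := by
  refine le_antisymm (fun x hx ↦ ?_) (le_iInf fun _ ↦ le_sup_left)
  rw [← Ideal.Quotient.eq_zero_iff_mem]
  refine IsHausdorff.haus ‹_› _ fun k ↦ ?_
  rw [SModEq.zero, Ideal.smul_top_eq_map, Submodule.restrictScalars_mem,
    Ideal.Quotient.algebraMap_eq, Ideal.mem_quotient_iff_mem_sup, sup_comm]
  exact Submodule.mem_iInf _ |>.mp hx k

theorem Ideal.smul_top_eq_self (I : Ideal R) : (I • ⊤ : Ideal R) = I := by
  rw [Ideal.smul_eq_mul, Ideal.mul_top]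

instance IsLocalRing.isArtinianRing_quotient_maximalIdeal_pow [IsNoetherianRing R]
    [IsLocalRing R] (k : ℕ) : IsArtinianRing (R ⧸ maximalIdeal R ^ k) := by
  cases k with
  | zero =>
    rw [pow_zero, Ideal.one_eq_top]
    infer_instance
  | succ k =>
    refine quotient_artinian_of_mem_minimalPrimes_of_isLocalRing _ ?_
    rw [← Ideal.radical_minimalPrimes, Ideal.radical_pow _ k.succ_ne_zero,
      (maximalIdeal.isMaximal R).isPrime.radical, Ideal.minimalPrimes_eq_subsingleton_self]
    rfl

theorem Ideal.exists_forall_sup_eq_of_antitone (I : Ideal R) [IsArtinianRing (R ⧸ I)]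
    {J : ℕ → Ideal R} (hJ : Antitone J) : ∃ c, ∀ n ≥ c, J n ⊔ I = J c ⊔ I := by
  let images : ℕ →o (Ideal (R ⧸ I))ᵒᵈ :=
    ⟨fun n ↦ (J n).map (Ideal.Quotient.mk I), fun _ _ h ↦ Ideal.map_mono (hJ h)⟩
  obtain ⟨c, hc⟩ := IsArtinian.monotone_stabilizes images
  refine ⟨c, fun n hn ↦ ?_⟩
  have h : (J c).map (Ideal.Quotient.mk I) = (J n).map (Ideal.Quotient.mk I) := hc n hn
  simpa only [Ideal.comap_map_of_surjective _ Ideal.Quotient.mk_surjective,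
    ← RingHom.ker_eq_comap_bot, Ideal.mk_ker] using
    congrArg (Ideal.comap (Ideal.Quotient.mk I)) h.symm

theorem IsPrecomplete.exists_forall_exists_sub_mem (I : Ideal R) [IsPrecomplete I R]
    {V : ℕ → Set R} (hV : ∀ k, ∀ x ∈ V k, ∃ z ∈ V (k + 1), x - z ∈ I ^ k)
    (hV0 : (V 0).Nonempty) : ∃ L, ∀ k, ∃ z ∈ V k, L - z ∈ I ^ k := by
  choose! lift hlift_mem hlift_sub using hV
  obtain ⟨x₀, hx₀⟩ := hV0
  let seq : ℕ → R := fun k ↦ Nat.rec x₀ (fun k x ↦ lift k x) k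
  have hseq : ∀ k, seq k ∈ V k := fun k ↦ by
    induction k with
    | zero => exact hx₀
    | succ k ih => exact hlift_mem k _ ih
  have hcauchy : AdicCompletion.IsAdicCauchy I R seq :=
    (AdicCompletion.isAdicCauchy_iff I R seq).mpr fun k ↦ by
      rw [SModEq.sub_mem, Ideal.smul_top_eq_self]
      exact hlift_sub k _ (hseq k)
  obtain ⟨L, hL⟩ := IsPrecomplete.prec ‹_› hcauchy
  refine ⟨L, fun k ↦ ⟨seq k, hseq k, ?_⟩⟩
  rw [← neg_mem_iff, neg_sub, ← Ideal.smul_top_eq_self (I ^ k), ← SModEq.sub_mem]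
  exact hL k

theorem IsLocalRing.exists_le_maximalIdeal_pow_of_antitone [IsNoetherianRing R] [IsLocalRing R]
    [IsPrecomplete (maximalIdeal R) R] {J : ℕ → Ideal R} (hJ : Antitone J) (hJ0 : ⨅ n, J n = ⊥)
    (s : ℕ) : ∃ n, J n ≤ maximalIdeal R ^ s := by
  by_contra! hJs
  set m := maximalIdeal R
  choose c hc using fun k ↦ (m ^ k).exists_forall_sup_eq_of_antitone hJ
  have hc_le : ∀ k n, J (c k) ⊔ m ^ k ≤ J n ⊔ m ^ k := fun k n ↦ by
    rcases le_total (c k) n with h | h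
    · exact (hc k n h).ge
    · exact sup_le_sup_right (hJ h) _
  -- The stable values of `J n ⊔ m ^ (s + j)`, with `m ^ s` removed, form a surjective inverse
  -- system; a limit of it lies in every `J n` but not in `m ^ s`.
  let U : ℕ → Set R := fun j ↦ ((J (c (s + j)) ⊔ m ^ (s + j) : Ideal R) : Set R) \ (m ^ s : Ideal R)
  have hU0 : (U 0).Nonempty := by
    obtain ⟨y, hyJ, hys⟩ := SetLike.not_le_iff_exists.mp (hJs (c (s + 0)))
    exact ⟨y, Ideal.mem_sup_left hyJ, hys⟩
  have hU : ∀ j, ∀ x ∈ U j, ∃ z ∈ U (j + 1), x - z ∈ m ^ j := by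
    rintro j x ⟨hxV, hxs⟩
    set n := max (c (s + j)) (c (s + (j + 1)))
    rw [SetLike.mem_coe, ← hc _ n (le_max_left ..)] at hxV
    obtain ⟨z, hz, w, hw, rfl⟩ := Submodule.mem_sup.mp hxV
    refine ⟨z, ⟨?_, fun hzs ↦ hxs ?_⟩, ?_⟩
    · rw [SetLike.mem_coe, ← hc _ n (le_max_right ..)]
      exact Ideal.mem_sup_left hz
    · exact add_mem hzs (Ideal.pow_le_pow_right (Nat.le_add_right s j) hw)
    · simpa using Ideal.pow_le_pow_right (Nat.le_add_left j s) hw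
  obtain ⟨L, hL⟩ := IsPrecomplete.exists_forall_exists_sub_mem m hU hU0
  have hLJ : ∀ n, L ∈ J n := fun n ↦ by
    rw [← Ideal.iInf_sup_pow_eq_self m (J n)]
    refine Submodule.mem_iInf _ |>.mpr fun k ↦ ?_
    obtain ⟨z, ⟨hzV, -⟩, hLz⟩ := hL k
    have hz : z ∈ J n ⊔ m ^ k :=
      sup_le_sup_left (Ideal.pow_le_pow_right (Nat.le_add_left k s)) (J n) (hc_le _ n hzV)
    simpa using add_mem (Ideal.mem_sup_right hLz) hz
  have hL0 : L = 0 := by simpa [hJ0] using Submodule.mem_iInf _ |>.mpr hLJ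
  obtain ⟨z, ⟨-, hzs⟩, hLz⟩ := hL s
  exact hzs (by simpa [hL0] using hLz)

theorem Ideal.iInf_ge_eq_bot_of_iInf_eq_bot [IsDomain R] {a : ℕ → Ideal R} (ha : ⨅ i, a i = ⊥)
    {N : ℕ} (hne : ∀ i < N, a i ≠ ⊥) : ⨅ i ≥ N, a i = ⊥ := by
  have hprod : ∏ i ∈ Finset.range N, a i ≠ ⊥ :=
    Finset.prod_ne_zero_iff.mpr fun i hi ↦ hne i (Finset.mem_range.mp hi)
  have hle : (∏ i ∈ Finset.range N, a i) * ⨅ i ≥ N, a i ≤ ⨅ i, a i := le_iInf fun j ↦ by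
    rcases lt_or_ge j N with hj | hj
    · exact Ideal.mul_le_left.trans
        (Ideal.prod_le_inf.trans (Finset.inf_le (Finset.mem_range.mpr hj)))
    · exact Ideal.mul_le_right.trans (iInf₂_le j hj)
  rw [ha, le_bot_iff, Ideal.mul_eq_bot] at hle
  exact hle.resolve_left hprod

theorem exists_ge_forall_mem_Ico_mul_mem [IsNoetherianRing R] [IsLocalRing R] [IsDomain R]
    [IsPrecomplete (maximalIdeal R) R] {a : ℕ → Ideal R} {N : ℕ} (htail : ⨅ i ≥ N, a i = ⊥)
    {γ : R} (hγ : γ ≠ 0) (t : ℕ) :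
    ∃ N' ≥ N, ∀ r : R, (∀ i ∈ Finset.Ico N N', r * γ ∈ a i) → r ∈ maximalIdeal R ^ t := by
  let J : ℕ → Ideal R := fun L ↦ ⨅ i ∈ Finset.Ico N L, (a i).colon (Ideal.span {γ})
  have hJ : Antitone J := fun _ _ h ↦ biInf_mono fun _ hi ↦ Finset.Ico_subset_Ico_right h hi
  have hJ0 : ⨅ L, J L = ⊥ := by
    refine eq_bot_iff.mpr fun r hr ↦ ?_
    have hrγ : r * γ ∈ ⨅ i ≥ N, a i := by
      simp only [J, Submodule.mem_iInf, Submodule.mem_colon_span_singleton, smul_eq_mul] at hr ⊢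
      exact fun i hi ↦ hr (i + 1) i (Finset.mem_Ico.mpr ⟨hi, i.lt_succ_self⟩)
    rw [htail, Ideal.mem_bot, mul_eq_zero] at hrγ
    exact (Ideal.mem_bot).mpr (hrγ.resolve_right hγ)
  obtain ⟨L, hL⟩ := exists_le_maximalIdeal_pow_of_antitone hJ hJ0 t
  refine ⟨max N L, le_max_left _ _, fun r hr ↦ hL (hJ (le_max_right N L) ?_)⟩
  simpa only [J, Submodule.mem_iInf, Submodule.mem_colon_span_singleton, smul_eq_mul] using hr

namespace AdicCompletion

variable {M : Type*} [AddCommGroup M] [Module R M] (I : Ideal R)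

noncomputable def series (v : ℕ → M) (hv : ∀ n, v n ∈ (I ^ n • ⊤ : Submodule R M)) :
    AdicCompletion I M :=
  mk I M <| .mk I M (fun n ↦ ∑ k ∈ Finset.range n, v k) fun n ↦ by
    rw [SModEq.sub_mem, Finset.sum_range_succ, sub_add_cancel_left, neg_mem_iff]
    exact hv n

theorem smul_series_eq_zero_iff {v : ℕ → M} (hv : ∀ n, v n ∈ (I ^ n • ⊤ : Submodule R M))
    (r : R) : r • series I v hv = 0 ↔
      ∀ n, r • ∑ k ∈ Finset.range n, v k ∈ (I ^ n • ⊤ : Submodule R M) := by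
  simp only [series, AdicCompletion.ext_iff, val_smul_apply, mk_apply_coe, val_zero_apply,
    AdicCauchySequence.mk_coe, Submodule.mkQ_apply, ← Submodule.Quotient.mk_smul,
    Submodule.Quotient.mk_eq_zero]

theorem smul_of_eq_zero_iff (x : M) (r : R) :
    r • of I M x = 0 ↔ ∀ n, r • x ∈ (I ^ n • ⊤ : Submodule R M) := by
  simp only [AdicCompletion.ext_iff, val_smul_apply, of_apply, val_zero_apply,
    Submodule.mkQ_apply, ← Submodule.Quotient.mk_smul, Submodule.Quotient.mk_eq_zero]

end AdicCompletion

theorem IsHausdorff.smul_eq_zero_of_eventually_eq {M N : Type*} [AddCommGroup M] [Module R M]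
    [AddCommGroup N] [Module R N] (I : Ideal R) [IsHausdorff I N] (f : M →ₗ[R] N) {y : ℕ → M}
    {r : R} (hy : ∀ n, r • y n ∈ (I ^ n • ⊤ : Submodule R M)) {c : N}
    (hc : ∀ᶠ n in atTop, f (y n) = c) : r • c = 0 := by
  refine IsHausdorff.haus ‹_› _ fun n ↦ ?_
  obtain ⟨k, hk, hkn⟩ := (hc.and (eventually_ge_atTop n)).exists
  rw [SModEq.zero, ← hk, ← map_smul]
  exact Submodule.smul_mono_left (Ideal.pow_le_pow_right hkn)
    (Submodule.smul_top_le_comap_smul_top _ f (hy k))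

section BlockSeries

variable (I : Ideal R) (a : ℕ → Ideal R)

theorem DirectSum.sum_range_smul_sum_Ico_of_one_apply {b : ℕ → ℕ} (hb : Monotone b) (γ : ℕ → R)
    {t i n : ℕ} (hi : i ∈ Finset.Ico (b t) (b (t + 1))) (hn : t < n) :
    (∑ t' ∈ Finset.range n, γ t' • ∑ j ∈ Finset.Ico (b t') (b (t' + 1)),
      of (fun i ↦ R ⧸ a i) j 1) i = Ideal.Quotient.mk (a i) (γ t) := by
  have hmem : ∀ t', i ∈ Finset.Ico (b t') (b (t' + 1)) ↔ t' = t := fun t' ↦ by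
    refine ⟨fun hi' ↦ ?_, by rintro rfl; exact hi⟩
    by_contra h
    exact Set.disjoint_left.mp (hb.pairwise_disjoint_on_Ico_succ h) (by simpa using hi')
      (by simpa using hi)
  simp [DirectSum.sum_apply, DirectSum.smul_apply, DirectSum.of_apply, hmem, hn, Algebra.smul_def]

noncomputable def blockSeries (b : ℕ → ℕ) {γ : ℕ → R} (hγ : ∀ t, γ t ∈ I ^ t) :
    AdicCompletion I (⨁ i, R ⧸ a i) :=
  AdicCompletion.series I (fun t ↦ γ t • ∑ i ∈ Finset.Ico (b t) (b (t + 1)), of _ i 1)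
    fun t ↦ Submodule.smul_mem_smul (hγ t) trivial

theorem mul_mem_of_smul_blockSeries_eq_zero [∀ i, IsHausdorff I (R ⧸ a i)] {b : ℕ → ℕ}
    (hb : Monotone b) {γ : ℕ → R} (hγ : ∀ t, γ t ∈ I ^ t) {r : R}
    (hr : r • blockSeries I a b hγ = 0) {t i : ℕ} (hi : i ∈ Finset.Ico (b t) (b (t + 1))) :
    r * γ t ∈ a i := by
  have h := IsHausdorff.smul_eq_zero_of_eventually_eq I (component R ℕ _ i)
    ((AdicCompletion.smul_series_eq_zero_iff I _ r).mp hr)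
    ((eventually_gt_atTop t).mono fun n hn ↦ (apply_eq_component R _ i).symm.trans
      (sum_range_smul_sum_Ico_of_one_apply a hb γ hi hn))
  rwa [← Ideal.Quotient.eq_zero_iff_mem, map_mul]

end BlockSeries

theorem exists_element_with_trivial_annihilator_of_eq_bot (I : Ideal R) {a : ℕ → Ideal R}
    {j : ℕ} [IsHausdorff I (R ⧸ a j)] (hj : a j = ⊥) :
    ∃ x : AdicCompletion I (⨁ i, R ⧸ a i), ∀ r : R, r • x = 0 → r = 0 := by
  refine ⟨AdicCompletion.of I _ (of (fun i ↦ R ⧸ a i) j 1), fun r hr ↦ ?_⟩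
  have h := IsHausdorff.smul_eq_zero_of_eventually_eq I (component R ℕ _ j) (y := fun _ ↦ _)
    ((AdicCompletion.smul_of_eq_zero_iff I _ r).mp hr)
    (Eventually.of_forall fun _ ↦ (apply_eq_component R _ j).symm.trans (of_eq_same j 1))
  simpa [Algebra.smul_def, Ideal.Quotient.eq_zero_iff_mem, hj] using h

theorem exists_element_with_trivial_annihilator_of_forall_ne_bot [IsNoetherianRing R]
    [IsLocalRing R] [IsDomain R] [IsPrecomplete (maximalIdeal R) R] {a : ℕ → Ideal R}
    (ha : ⨅ i, a i = ⊥) (hne : ∀ i, a i ≠ ⊥) :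
    ∃ x : AdicCompletion (maximalIdeal R) (⨁ i, R ⧸ a i), ∀ r : R, r • x = 0 → r = 0 := by
  obtain ⟨γ, hγm, hγ0⟩ : ∃ γ ∈ maximalIdeal R, γ ≠ 0 := by
    obtain ⟨i, hi⟩ : ∃ i, a i ≠ ⊤ := by
      by_contra! h
      simp [h] at ha
    obtain ⟨γ, hγ, hγ0⟩ := Submodule.exists_mem_ne_zero_of_ne_bot (hne i)
    exact ⟨γ, le_maximalIdeal hi hγ, hγ0⟩
  choose next hnext_ge hnext using fun N t ↦ exists_ge_forall_mem_Ico_mul_mem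
    (Ideal.iInf_ge_eq_bot_of_iInf_eq_bot ha (N := N) fun i _ ↦ hne i) (pow_ne_zero t hγ0) t
  let b : ℕ → ℕ := fun t ↦ Nat.rec 0 (fun t N ↦ next N t) t
  have hb : Monotone b := monotone_nat_of_le_succ fun t ↦ hnext_ge (b t) t
  refine ⟨blockSeries _ a b (fun t ↦ Ideal.pow_mem_pow hγm t), fun r hr ↦ ?_⟩
  have hr_pow : ∀ t, r ∈ maximalIdeal R ^ t := fun t ↦
    hnext (b t) t r fun i hi ↦ mul_mem_of_smul_blockSeries_eq_zero _ a hb _ hr hi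
  have := Submodule.mem_iInf _ |>.mpr hr_pow
  rwa [Ideal.iInf_pow_eq_bot_of_isLocalRing _ (maximalIdeal.isMaximal R).ne_top,
    Ideal.mem_bot] at this

open DirectSum in
theorem exists_element_with_trivial_annihilator_in_completion
    (R : Type u) [CommRing R] [IsNoetherianRing R] [IsLocalRing R] [IsDomain R]
    [IsAdicComplete (maximalIdeal R) R]
    (a : ℕ → Ideal R) (hfaith : (⨅ i : ℕ, a i) = ⊥) :
    ∃ x : AdicCompletion (maximalIdeal R) (⨁ i : ℕ, R ⧸ a i),
      ∀ r : R, r • x = 0 → r = 0 := by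
  by_cases h : ∃ j, a j = ⊥
  · obtain ⟨j, hj⟩ := h
    exact exists_element_with_trivial_annihilator_of_eq_bot _ hj
  · exact exists_element_with_trivial_annihilator_of_forall_ne_bot hfaith (not_exists.mp h)
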